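/- arXiv:2001.05236 — 4 statements merged into one kernel-verified Lean document; each statement's English description precedes it below -/
import Mathlib

section
/- For every connected linear graph ℍ, the tree order relaxation rel(ℍ) embeds into ℍ, and every embedding of rel(ℍ) into ℍ fixes every vertex of the stem of rel(ℍ). -/
/-- A tree-ordered graph (tog): a simple graph together with a partial order on its
vertices that is a tree order (sets of predecessors are linearly ordered) and that
guards the edge relation (endpoints of every edge are comparable). -/
structure Tog (V : Type) where
  G : SimpleGraph V
  le : V → V → Prop
  le_refl : ∀ v, le v v
  le_antisymm : ∀ u v, le u v → le v u → u = v
  le_trans : ∀ u v w, le u v → le v w → le u w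
  tree : ∀ x y z, le y x → le z x → le y z ∨ le z y
  guard : ∀ u v, G.Adj u v → le u v ∨ le v u

namespace Tog

variable {V W : Type}

/-- A linear graph is a tog whose order is total. -/
def IsLinear (H : Tog V) : Prop := ∀ u v, H.le u v ∨ H.le v u

/-- An embedding of a tog `H` into a tog `G`: an injective map preserving edges
and the order. -/
def IsEmbedding (H : Tog V) (G : Tog W) (φ : V → W) : Prop :=
  Function.Injective φ ∧ (∀ u v, H.G.Adj u v → G.G.Adj (φ u) (φ v)) ∧
    ∀ u v, H.le u v → G.le (φ u) (φ v)

/-- An embedding of the induced subtog `H[A]` into `G`, given as a map defined on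
all of `V` but constrained only on `A`.  -/
def IsEmbeddingOn (H : Tog V) (G : Tog W) (A : Set V) (φ : V → W) : Prop :=
  Set.InjOn φ A ∧ (∀ u ∈ A, ∀ v ∈ A, H.G.Adj u v → G.G.Adj (φ u) (φ v)) ∧
    ∀ u ∈ A, ∀ v ∈ A, H.le u v → G.le (φ u) (φ v)

/-- The stem of a tog: the set of vertices comparable with every vertex,
i.e. the maximal linearly ordered downward chain lying below all other vertices. -/
def stem (H : Tog V) : Set V := {u | ∀ v, H.le u v ∨ H.le v u}

/-- `s` is a stem prefix of `H`: a downward-closed subset of the stem. -/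
def IsStemPrefix (H : Tog V) (s : Set V) : Prop :=
  s ⊆ H.stem ∧ ∀ u ∈ H.stem, ∀ v ∈ s, H.le u v → u ∈ s

/-- Leaves of a tog: vertices maximal in the tree order. -/
def leaves (H : Tog V) : Set V := {u | ∀ v, H.le u v → v = u}

/-- The vertex set of the piece induced by a set `S` of leaves: the union of the
root paths of the members of `S`. -/
def pieceSet (H : Tog V) (S : Set V) : Set V := {y | ∃ x ∈ S, H.le y x}

/-- `H = H[A₁] ⊕ H[A₂]`: the vertex sets `A₁`, `A₂` are pieces of `H` induced by
nonempty leaf sets that partition the leaves of `H`. -/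
def PieceDecomp (H : Tog V) (A₁ A₂ : Set V) : Prop :=
  ∃ S₁ S₂ : Set V, S₁.Nonempty ∧ S₂.Nonempty ∧ Disjoint S₁ S₂ ∧
    S₁ ∪ S₂ = H.leaves ∧ A₁ = H.pieceSet S₁ ∧ A₂ = H.pieceSet S₂

/-- The induced subtog on a vertex set `A`. -/
def induce (H : Tog V) (A : Set V) : Tog A where
  G := H.G.induce A
  le u v := H.le u v
  le_refl v := H.le_refl v
  le_antisymm u v h1 h2 := Subtype.ext (H.le_antisymm _ _ h1 h2)
  le_trans u v w := H.le_trans _ _ _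
  tree x y z := H.tree _ _ _
  guard u v h := H.guard _ _ h

/-- The ancestor relation of the elimination tree of a (connected) linear graph `H`:
`u` is an ancestor of `v` iff there is a walk from `u` to `v` all of whose vertices
come after `u` in the linear order. -/
def relLe (H : Tog V) (u v : V) : Prop :=
  ∃ p : H.G.Walk u v, ∀ w ∈ p.support, H.le u w

/-- The tree order relaxation `rel(H)` of a linear graph `H`: the tog on the same
graph whose order is the ancestor relation of the elimination tree of `H`. -/
def relax (H : Tog V) (hlin : H.IsLinear) : Tog V where
  G := H.G
  le := H.relLe
  le_refl v := ⟨SimpleGraph.Walk.nil, by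
    intro w hw
    simp only [SimpleGraph.Walk.support_nil, List.mem_singleton] at hw
    subst hw; exact H.le_refl w⟩
  le_antisymm u v h1 h2 := by
    obtain ⟨p, hp⟩ := h1; obtain ⟨q, hq⟩ := h2
    exact H.le_antisymm u v (hp v p.end_mem_support) (hq u q.end_mem_support)
  le_trans u v w h1 h2 := by
    obtain ⟨p, hp⟩ := h1; obtain ⟨q, hq⟩ := h2
    refine ⟨p.append q, ?_⟩
    intro x hx
    rcases (SimpleGraph.Walk.mem_support_append_iff _ _).1 hx with h | h
    · exact hp x h
    · exact H.le_trans u v x (hp v p.end_mem_support) (hq x h)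
  tree x y z h1 h2 := by
    obtain ⟨p, hp⟩ := h1; obtain ⟨q, hq⟩ := h2
    rcases hlin y z with h | h
    · left
      refine ⟨p.append q.reverse, ?_⟩
      intro w hw
      rcases (SimpleGraph.Walk.mem_support_append_iff _ _).1 hw with hw | hw
      · exact hp w hw
      · rw [SimpleGraph.Walk.support_reverse, List.mem_reverse] at hw
        exact H.le_trans y z w h (hq w hw)
    · right
      refine ⟨q.append p.reverse, ?_⟩
      intro w hw
      rcases (SimpleGraph.Walk.mem_support_append_iff _ _).1 hw with hw | hw
      · exact hq w hw
      · rw [SimpleGraph.Walk.support_reverse, List.mem_reverse] at hw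
        exact H.le_trans z y w h (hp w hw)
  guard u v h := by
    rcases H.guard u v h with hle | hle
    · left
      refine ⟨SimpleGraph.Walk.cons h SimpleGraph.Walk.nil, ?_⟩
      intro w hw
      simp only [SimpleGraph.Walk.support_cons, SimpleGraph.Walk.support_nil,
        List.mem_cons, List.mem_singleton] at hw
      rcases hw with rfl | hw
      · exact H.le_refl w
      · rcases hw with rfl | hw
        · exact hle
        · simp at hw
    · right
      refine ⟨SimpleGraph.Walk.cons h.symm SimpleGraph.Walk.nil, ?_⟩
      intro w hw
      simp only [SimpleGraph.Walk.support_cons, SimpleGraph.Walk.support_nil,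
        List.mem_cons, List.mem_singleton] at hw
      rcases hw with rfl | hw
      · exact H.le_refl w
      · rcases hw with rfl | hw
        · exact hle
        · simp at hw

/-- A tog is an etog (elimination-ordered graph) if it is the tree order relaxation
of some linear graph. -/
def IsEtog (D : Tog V) : Prop := ∃ (L : Tog V) (hlin : L.IsLinear), D = L.relax hlin

/-- A pattern relaxation of a pattern graph `H₀`: the relaxation of some linear
ordering of `H₀`. -/
def IsPatternRelaxation (H₀ : SimpleGraph V) (HH : Tog V) : Prop :=
  ∃ (L : Tog V) (hlin : L.IsLinear), L.G = H₀ ∧ HH = L.relax hlin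

/-- Weakly `r`-reachable vertices from `u` in an ordered graph `G`. -/
def wreach (G : Tog W) (r : ℕ) (u : W) : Set W :=
  {v | ∃ p : G.G.Walk u v, p.IsPath ∧ p.length ≤ r ∧ ∀ w ∈ p.support, G.le v w}

/-- Strongly `r`-reachable vertices from `u` in an ordered graph `G`. -/
def sreach (G : Tog W) (r : ℕ) (u : W) : Set W :=
  {v | G.le v u ∧ ∃ p : G.G.Walk u v, p.IsPath ∧ p.length ≤ r ∧
    ∀ w ∈ p.support, w ≠ v → G.le u w}

/-- The embedding count `#_{x̄→ȳ}(H, G)`: the number of embeddings of `H` into `G`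
mapping the (ordered) set `xb` onto `yb`. -/
noncomputable def embCount (H : Tog V) (G : Tog W) (xb : Set V) (yb : Set W) : ℕ :=
  {φ : V → W | H.IsEmbedding G φ ∧ φ '' xb = yb}.ncard

/-- The embedding count of the piece `H[A]` into `G`. -/
noncomputable def pieceEmbCount (H : Tog V) (G : Tog W) (A : Set V)
    (xb : Set V) (yb : Set W) : ℕ :=
  {φ : A → W | (H.induce A).IsEmbedding G φ ∧ φ '' (Subtype.val ⁻¹' xb) = yb}.ncard

/-- The relaxed embedding count `#_{x̄→ȳ}(H, G | H₁, H₂)`: the number of maps whose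
restrictions to the pieces `H[A₁]` and `H[A₂]` are embeddings into `G` and which map
`xb` onto `yb`. -/
noncomputable def relEmbCount (H : Tog V) (G : Tog W) (A₁ A₂ : Set V)
    (xb : Set V) (yb : Set W) : ℕ :=
  {φ : V → W | H.IsEmbeddingOn G A₁ φ ∧ H.IsEmbeddingOn G A₂ φ ∧ φ '' xb = yb}.ncard

/-- A defect of the pieces `H[A₁]`, `H[A₂]` (decomposed along the stem prefix `xb`):
an etog `D` into which `H` does not embed, `H[A₁]` embeds via the identity, `H[A₂]`
embeds via a map `φ` that is the identity on `(A₂ \ A₁) ∪ xb`, and whose vertex set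
is `A₁ ∪ φ(A₂)`. -/
def IsDefect (H : Tog V) (A₁ A₂ xb : Set V) (D : Tog V) : Prop :=
  IsEtog D ∧
  (¬ ∃ ψ : V → V, H.IsEmbedding D ψ) ∧
  H.IsEmbeddingOn D A₁ id ∧
  ∃ φ : V → V, H.IsEmbeddingOn D A₂ φ ∧ (∀ v ∈ (A₂ \ A₁) ∪ xb, φ v = v) ∧
    A₁ ∪ φ '' A₂ = Set.univ

/-- Automorphism of a tog. -/
def IsAuto (H : Tog V) (φ : V → V) : Prop :=
  Function.Bijective φ ∧ (∀ u v, H.G.Adj u v ↔ H.G.Adj (φ u) (φ v)) ∧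
    ∀ u v, H.le u v ↔ H.le (φ u) (φ v)

/-- The induced subtogs `H[xb]` and `G[yb]` are isomorphic. -/
def IndIso (H : Tog V) (G : Tog W) (xb : Set V) (yb : Set W) : Prop :=
  ∃ f : V → W, Set.BijOn f xb yb ∧ ∀ u ∈ xb, ∀ v ∈ xb,
    (H.G.Adj u v ↔ G.G.Adj (f u) (f v)) ∧ (H.le u v ↔ G.le (f u) (f v))

end Tog

/-!
Vertices of the stem of `rel(ℍ)` are comparable in `rel(ℍ)` with every vertex, so an embedding
`φ` of `rel(ℍ)` into `ℍ` maps the vertices below (above) such a `v` injectively to vertices below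
(above) `φ v`. In the finite chain `ℍ`, having at least as many vertices below as `v` forces
`v ≼ φ v`, and having at least as many above forces `φ v ≼ v`.
-/

theorem rel_of_ncard_setOf_le {V : Type} [Finite V] {r : V → V → Prop}
    (trans : ∀ a b c, r a b → r b c → r a c) (total : ∀ a b, r a b ∨ r b a) {x y : V}
    (h : {w | r w x}.ncard ≤ {w | r w y}.ncard) : r x y := by
  by_contra hxy
  have hyx : r y x := (total x y).resolve_left hxy
  have hssub : {w | r w y} ⊂ {w | r w x} :=
    ⟨fun w hw => trans w y x hw hyx, fun hsub => hxy (hsub ((total x x).elim id id))⟩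
  exact (Set.ncard_lt_ncard hssub (Set.toFinite _)).not_ge h

namespace Tog

variable {V : Type}

theorem IsLinear.apply_eq_self_of_injective {H : Tog V} [Finite V] (hlin : H.IsLinear)
    {φ : V → V} (hinj : φ.Injective) {v : V} (hdown : ∀ w, H.le w v → H.le (φ w) (φ v))
    (hup : ∀ w, H.le v w → H.le (φ v) (φ w)) : φ v = v := by
  have hncard_down : {w | H.le w v}.ncard ≤ {w | H.le w (φ v)}.ncard :=
    Set.ncard_le_ncard_of_injOn φ hdown hinj.injOn (Set.toFinite _)
  have hncard_up : {w | H.le v w}.ncard ≤ {w | H.le (φ v) w}.ncard :=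
    Set.ncard_le_ncard_of_injOn φ hup hinj.injOn (Set.toFinite _)
  refine H.le_antisymm _ _ ?_ (rel_of_ncard_setOf_le H.le_trans hlin hncard_down)
  exact rel_of_ncard_setOf_le (r := fun a b => H.le b a)
    (fun a b c hab hbc => H.le_trans c b a hbc hab) (fun a b => hlin b a) hncard_up

theorem le_of_relLe {H : Tog V} {u v : V} (h : H.relLe u v) : H.le u v :=
  let ⟨p, hp⟩ := h
  hp v p.end_mem_support

theorem relax_isEmbedding_id (H : Tog V) (hlin : H.IsLinear) :
    (H.relax hlin).IsEmbedding H id :=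
  ⟨Function.injective_id, fun _ _ h => h, fun _ _ => le_of_relLe⟩

section stem

variable {H : Tog V} {hlin : H.IsLinear} {v w : V}

theorem relLe_of_le_of_mem_stem (hv : v ∈ (H.relax hlin).stem) (hvw : H.le v w) :
    H.relLe v w := by
  rcases hv w with hvw' | hwv
  · exact hvw'
  · obtain rfl := H.le_antisymm _ _ (le_of_relLe hwv) hvw
    exact hwv

theorem relLe_of_le_of_mem_stem' (hv : v ∈ (H.relax hlin).stem) (hwv : H.le w v) :
    H.relLe w v := by
  rcases hv w with hvw | hwv'
  · obtain rfl := H.le_antisymm _ _ (le_of_relLe hvw) hwv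
    exact hvw
  · exact hwv'

end stem

end Tog

theorem relax_embeds_fixing_stem_general {V : Type} [Fintype V] (H : Tog V)
    (hlin : H.IsLinear) :
    (∃ φ : V → V, (H.relax hlin).IsEmbedding H φ) ∧
    ∀ φ : V → V, (H.relax hlin).IsEmbedding H φ →
      ∀ v ∈ (H.relax hlin).stem, φ v = v := by
  refine ⟨⟨id, Tog.relax_isEmbedding_id H hlin⟩, ?_⟩
  rintro φ ⟨hinj, -, hle⟩ v hv
  exact hlin.apply_eq_self_of_injective hinj
    (fun w hwv => hle w v (Tog.relLe_of_le_of_mem_stem' hv hwv))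
    (fun w hvw => hle v w (Tog.relLe_of_le_of_mem_stem hv hvw))

/-- the tree order relaxation of a connected linear graph embeds into
it, and every such embedding fixes the stem of the relaxation pointwise. -/
theorem relax_embeds_fixing_stem {V : Type} [Fintype V] (H : Tog V)
    (hlin : H.IsLinear) (hconn : H.G.Connected) :
    (∃ φ : V → V, (H.relax hlin).IsEmbedding H φ) ∧
    ∀ φ : V → V, (H.relax hlin).IsEmbedding H φ →
      ∀ v ∈ (H.relax hlin).stem, φ v = v :=
  relax_embeds_fixing_stem_general H hlin
end

section
/- Let H be a connected pattern graph, let 𝐇 ∈ ℋ(H) be a pattern relaxation of H, let 𝕂 be a linear piece of 𝐇, and let z = max(𝕂). Then for every embedding φ of 𝐇 into a linear graph 𝔾 and every vertex x ∈ V(𝕂), it holds that φ(x) ∈ W^{|𝐇|}_𝔾[φ(z)]; that is, the image φ(V(𝕂)) is contained in the closed weakly |𝐇|-reachable set of φ(z). -/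
/-! In `rel(L)`, `x ≼ ℓ` means that some walk of `L` from `x` to `ℓ` stays above `x` in `L`.
Shortening it to a path keeps that property, and every vertex `w` of the path then satisfies
`x ≼ w` in `rel(L)` as well. Since `φ` preserves edges, order and distinctness,
the image of the path is a path from `φ ℓ` of length `< |H|` whose minimum is `φ x`. -/

namespace Tog

variable {V W : Type}

theorem relLe.exists_isPath_relLe {L : Tog V} {u v : V} (h : L.relLe u v) :
    ∃ p : L.G.Walk u v, p.IsPath ∧ ∀ w ∈ p.support, L.relLe u w := by
  classical
  obtain ⟨q, hq⟩ := h
  let p := q.toPath.val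
  refine ⟨p, q.toPath.prop, fun w hw => ⟨p.takeUntil w hw, fun w' hw' => hq w' ?_⟩⟩
  exact q.support_toPath_subset_support (p.support_takeUntil_subset_support hw hw')

theorem wreach_mono (G : Tog W) {r s : ℕ} (hrs : r ≤ s) (u : W) :
    G.wreach r u ⊆ G.wreach s u := by
  rintro v ⟨p, hp, hlen, hmin⟩
  exact ⟨p, hp, hlen.trans hrs, hmin⟩

def IsEmbedding.toHom {H : Tog V} {G : Tog W} {φ : V → W} (hφ : H.IsEmbedding G φ) :
    H.G →g G.G :=
  ⟨φ, fun h => hφ.2.1 _ _ h⟩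

theorem IsEmbedding.mem_wreach_of_isPath {H : Tog V} {G : Tog W} {φ : V → W}
    (hφ : H.IsEmbedding G φ) {u v : V} (p : H.G.Walk u v) (hp : p.IsPath)
    (hmin : ∀ w ∈ p.support, H.le u w) : φ u ∈ G.wreach p.length (φ v) := by
  have hlen : (p.map hφ.toHom).reverse.length = p.length := by simp
  have hmin' : ∀ w' ∈ (p.map hφ.toHom).reverse.support, G.le (φ u) w' := by
    intro w' hw'
    simp only [SimpleGraph.Walk.support_reverse, List.mem_reverse,
      SimpleGraph.Walk.support_map, List.mem_map] at hw'
    obtain ⟨w, hw, rfl⟩ := hw'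
    exact hφ.2.2 u w (hmin w hw)
  exact ⟨_, (hp.map hφ.1).reverse, hlen.le, hmin'⟩

end Tog

theorem linear_piece_in_wreach_general {V W : Type} [Fintype V]
    (H₀ : SimpleGraph V)
    (HH : Tog V) (hrel : Tog.IsPatternRelaxation H₀ HH)
    (ℓ : V)
    (G : Tog W)
    (φ : V → W) (hφ : HH.IsEmbedding G φ)
    (x : V) (hx : HH.le x ℓ) :
    φ x ∈ insert (φ ℓ) (G.wreach (Fintype.card V) (φ ℓ)) := by
  obtain ⟨L, hlin, rfl, rfl⟩ := hrel
  obtain ⟨p, hp, hrelLe⟩ := Tog.relLe.exists_isPath_relLe hx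
  exact Set.mem_insert_of_mem _
    (G.wreach_mono hp.length_lt.le _ (hφ.mem_wreach_of_isPath p hp hrelLe))

/-- Lemma linear-count-wcol: the image of a linear piece of a pattern
relaxation lies in the closed weakly `|H|`-reachable set of the image of its
maximum vertex. -/
theorem linear_piece_in_wreach {V W : Type} [Fintype V] [Fintype W]
    (H₀ : SimpleGraph V) (hconn : H₀.Connected)
    (HH : Tog V) (hrel : Tog.IsPatternRelaxation H₀ HH)
    (ℓ : V) (hℓ : ℓ ∈ HH.leaves)
    (G : Tog W) (hGlin : G.IsLinear)
    (φ : V → W) (hφ : HH.IsEmbedding G φ)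
    (x : V) (hx : HH.le x ℓ) :
    φ x ∈ insert (φ ℓ) (G.wreach (Fintype.card V) (φ ℓ)) :=
  linear_piece_in_wreach_general H₀ HH hrel ℓ G φ hφ x hx
end

section
/- Let H be a connected pattern graph, let 𝐇 ∈ ℋ(H) be a pattern relaxation of H, let 𝕂 be a linear piece of 𝐇 with maximum vertex z = max(𝕂), and let x <_𝕂 z be an arbitrary vertex of 𝕂. Then there exists a vertex y ∈ 𝕂 with x <_𝕂 y ≤_𝕂 z such that for every embedding φ of 𝐇 into a linear graph 𝔾, it holds that φ(x) ∈ S^{|H|}_𝔾[φ(y)], the closed strongly |H|-reachable set of φ(y). -/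
/-! In the elimination tree of a linear ordering `L`, take for `y` the child of `x` on the way to
`ℓ`: the `L`-least vertex of the component of `ℓ` in the subgraph strictly above `x` (in the
`L`-order). That component is connected and lies above `y`, so it consists of descendants of
`y`; as `x` has a neighbour in it, some path from `y` to `x` runs through descendants of `y`
only. An embedding carries this path to one witnessing strong reachability in the host graph. -/

namespace SimpleGraph

variable {V : Type} (G : SimpleGraph V)

def componentIn (S : Set V) (ℓ : V) : Set V :=
  {v | ∃ q : G.Walk v ℓ, ∀ w ∈ q.support, w ∈ S}

variable {G}

lemma mem_componentIn_of_mem_support {S : Set V} {v ℓ : V} (q : G.Walk v ℓ)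
    (hq : ∀ w ∈ q.support, w ∈ S) {w : V} (hw : w ∈ q.support) : w ∈ G.componentIn S ℓ := by
  classical
  exact ⟨q.dropUntil w hw, fun u hu => hq u (q.support_dropUntil_subset_support hw hu)⟩

lemma componentIn_subset {S : Set V} {ℓ : V} : G.componentIn S ℓ ⊆ S :=
  fun _ ⟨q, hq⟩ => hq _ q.start_mem_support

end SimpleGraph

namespace Tog

open SimpleGraph

variable {V W : Type}

lemma IsLinear.exists_forall_le [Finite V] {L : Tog V} (hlin : L.IsLinear) {s : Set V}
    (hs : s.Nonempty) : ∃ y ∈ s, ∀ v ∈ s, L.le y v := by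
  classical
  let _ : LinearOrder V :=
    { le := L.le, le_refl := L.le_refl, le_trans := L.le_trans,
      le_antisymm := L.le_antisymm, le_total := hlin, toDecidableLE := inferInstance }
  exact Set.exists_min_image s id s.toFinite hs

lemma relLe_of_mem_componentIn (L : Tog V) {S : Set V} {ℓ y v : V}
    (hy : y ∈ L.G.componentIn S ℓ) (hmin : ∀ u ∈ L.G.componentIn S ℓ, L.le y u)
    (hv : v ∈ L.G.componentIn S ℓ) : L.relLe y v := by
  obtain ⟨qy, hqy⟩ := hy
  obtain ⟨qv, hqv⟩ := hv
  refine ⟨qy.append qv.reverse, fun w hw => hmin w ?_⟩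
  rcases (Walk.mem_support_append_iff _ _).1 hw with hw | hw
  · exact mem_componentIn_of_mem_support qy hqy hw
  · rw [Walk.support_reverse, List.mem_reverse] at hw
    exact mem_componentIn_of_mem_support qv hqv hw

lemma exists_adj_walk_of_relLe {L : Tog V} {x ℓ : V} (hxℓ : L.relLe x ℓ) (hne : x ≠ ℓ) :
    ∃ c, L.G.Adj x c ∧ ∃ q : L.G.Walk c ℓ, ∀ w ∈ q.support, L.le x w ∧ w ≠ x := by
  classical
  obtain ⟨p, hp⟩ := hxℓ
  obtain ⟨c, hxc, q, hq⟩ := Walk.not_nil_iff.mp (Walk.not_nil_of_ne hne : ¬ p.toPath.val.Nil)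
  have hqpath := p.toPath.prop
  rw [hq, Walk.cons_isPath_iff] at hqpath
  refine ⟨c, hxc, q, fun w hw => ⟨hp w (p.support_toPath_subset_support ?_), ?_⟩⟩
  · rw [hq, Walk.support_cons]
    exact List.mem_cons_of_mem _ hw
  · rintro rfl
    exact hqpath.2 hw

lemma exists_relLe_walk_of_relLe [Finite V] {L : Tog V} (hlin : L.IsLinear) {x ℓ : V}
    (hxℓ : L.relLe x ℓ) (hne : x ≠ ℓ) :
    ∃ y, L.relLe x y ∧ x ≠ y ∧ L.relLe y ℓ ∧
      ∃ p : L.G.Walk y x, ∀ w ∈ p.support, w ≠ x → L.relLe y w := by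
  set C := L.G.componentIn {w | L.le x w ∧ w ≠ x} ℓ
  obtain ⟨c, hxc, q, hq⟩ := exists_adj_walk_of_relLe hxℓ hne
  have hqC : ∀ w ∈ q.support, w ∈ C := fun w => mem_componentIn_of_mem_support q hq
  obtain ⟨y, hyC, hymin⟩ := hlin.exists_forall_le ⟨c, hqC c q.start_mem_support⟩
  have hrel : ∀ v ∈ C, L.relLe y v := fun v hv => L.relLe_of_mem_componentIn hyC hymin hv
  obtain ⟨hxy, hxney⟩ := componentIn_subset hyC
  obtain ⟨qy, hqy⟩ := hyC
  let P : L.G.Walk y x := (qy.append q.reverse).concat hxc.symm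
  have hPC : ∀ w ∈ P.support, w ≠ x → w ∈ C := by
    intro w hw hwx
    rw [Walk.support_concat, List.mem_append, List.mem_singleton] at hw
    rcases hw with hw | rfl
    · rcases (Walk.mem_support_append_iff _ _).1 hw with hw | hw
      · exact mem_componentIn_of_mem_support qy hqy hw
      · rw [Walk.support_reverse, List.mem_reverse] at hw
        exact hqC w hw
    · exact absurd rfl hwx
  refine ⟨y, ⟨P.reverse, fun w hw => ?_⟩, hxney.symm, hrel ℓ (hqC ℓ q.end_mem_support),
    P, fun w hw hwx => hrel w (hPC w hw hwx)⟩
  rw [Walk.support_reverse, List.mem_reverse] at hw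
  by_cases hwx : w = x
  · exact hwx ▸ L.le_refl x
  · exact (componentIn_subset (hPC w hw hwx)).1

lemma mem_sreach_card_of_walk [Fintype V] (H : Tog V) {x y : V} (hxy : H.le x y)
    (p : H.G.Walk y x) (hp : ∀ w ∈ p.support, w ≠ x → H.le y w) :
    x ∈ H.sreach (Fintype.card V) y := by
  classical
  exact ⟨hxy, p.toPath, p.toPath.prop, p.toPath.prop.length_lt.le,
    fun w hw => hp w (p.support_toPath_subset_support hw)⟩

lemma IsEmbedding.mem_sreach {H : Tog V} {G : Tog W} {φ : V → W} (hφ : H.IsEmbedding G φ)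
    {r : ℕ} {x y : V} (hx : x ∈ H.sreach r y) : φ x ∈ G.sreach r (φ y) := by
  obtain ⟨hinj, hadj, hle⟩ := hφ
  obtain ⟨hxy, p, hpath, hlen, hp⟩ := hx
  let f : H.G →g G.G := ⟨φ, hadj _ _⟩
  refine ⟨hle _ _ hxy, p.map f, (Walk.isPath_map_iff_of_injective hinj).2 hpath,
    (p.length_map f).trans_le hlen, fun w hw hwx => ?_⟩
  rw [Walk.support_map, List.mem_map] at hw
  obtain ⟨u, hu, rfl⟩ := hw
  exact hle _ _ (hp u hu fun hux => hwx (hux ▸ rfl))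

end Tog

theorem linear_piece_hint_sreach_general {V W : Type} [Fintype V]
    (H₀ : SimpleGraph V)
    (HH : Tog V) (hrel : Tog.IsPatternRelaxation H₀ HH)
    (ℓ : V)
    (G : Tog W)
    (x : V) (hx : HH.le x ℓ) (hxne : x ≠ ℓ) :
    ∃ y, HH.le x y ∧ x ≠ y ∧ HH.le y ℓ ∧
      ∀ φ : V → W, HH.IsEmbedding G φ →
        φ x ∈ insert (φ y) (G.sreach (Fintype.card V) (φ y)) := by
  obtain ⟨L, hlin, -, rfl⟩ := hrel
  obtain ⟨y, hxy, hxney, hyℓ, p, hp⟩ := Tog.exists_relLe_walk_of_relLe hlin hx hxne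
  have hsreach : x ∈ (L.relax hlin).sreach (Fintype.card V) y :=
    (L.relax hlin).mem_sreach_card_of_walk hxy p hp
  exact ⟨y, hxy, hxney, hyℓ, fun φ hφ => Set.mem_insert_of_mem _ (hφ.mem_sreach hsreach)⟩

/-- Lemma linear-count-col: for every vertex `x` of a linear piece of
a pattern relaxation, strictly below the maximum `ℓ` of the piece, there is a hint
vertex `y` of the piece, strictly above `x` and at most `ℓ`, such that for every
embedding `φ` into a linear host graph, `φ x` lies in the closed strongly
`|H|`-reachable set of `φ y`. -/
theorem linear_piece_hint_sreach {V W : Type} [Fintype V] [Fintype W]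
    (H₀ : SimpleGraph V) (hconn : H₀.Connected)
    (HH : Tog V) (hrel : Tog.IsPatternRelaxation H₀ HH)
    (ℓ : V) (hℓ : ℓ ∈ HH.leaves)
    (G : Tog W) (hGlin : G.IsLinear)
    (x : V) (hx : HH.le x ℓ) (hxne : x ≠ ℓ) :
    ∃ y, HH.le x y ∧ x ≠ y ∧ HH.le y ℓ ∧
      ∀ φ : V → W, HH.IsEmbedding G φ →
        φ x ∈ insert (φ y) (G.sreach (Fintype.card V) (φ y)) :=
  linear_piece_hint_sreach_general H₀ HH hrel ℓ G x hx hxne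
end

section
/- Let 𝐇 be a connected etog with pieces 𝐇₁ ⊕_x̄ 𝐇₂ = 𝐇, let 𝐃 ∈ defects(𝐇₁, 𝐇₂), let 𝔻 be a linear graph with rel(𝔻) = 𝐃, and let ψ be an embedding of 𝐃 into 𝔻 fixing x̄ pointwise. Then for every map θ : V(𝐇) → V(𝔻) whose restrictions to 𝐇₁ and to 𝐇₂ are embeddings into 𝔻, the map ξ := ψ⁻¹ ∘ θ from V(𝐇) to V(𝐃) has the property that its restrictions to 𝐇₁ and to 𝐇₂ are embeddings into 𝐃. -/
/-!
Because `V` is finite, the injective graph endomorphism `ψ` permutes the edges, so it reflects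
adjacency; hence `ξ` maps the edges of each piece to edges of `𝐃`, and it is injective on each
piece because `θ = ψ ∘ ξ` is. For the order, `u ≼ v` in `𝐇 = rel(M)` is witnessed by a walk
from `u` to `v` in `M` staying above `u`. Every edge of that walk lies in a single piece, and
along it the tree property of `𝐃` keeps `ξ u` below the image of each vertex: the only
alternative would put `θ` of a later vertex below `θ u` inside one piece, against `θ` being an
order embedding there.
-/

open Function

theorem rel_of_rel_map_of_injective {α : Type*} [Finite α] {f : α → α} (hf : Injective f)
    {r : α → α → Prop} (hr : ∀ a b, r a b → r (f a) (f b)) {a b : α} (h : r (f a) (f b)) :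
    r a b := by
  let s : Set (α × α) := {p | r p.1 p.2}
  have hmaps : Set.MapsTo (Prod.map f f) s s := fun p hp => hr _ _ hp
  obtain ⟨⟨c, d⟩, hcd, hcd_eq⟩ :=
    ((s.toFinite.injOn_iff_bijOn_of_mapsTo hmaps).1 (hf.prodMap hf).injOn).surjOn
      (show (f a, f b) ∈ s from h)
  obtain ⟨hc, hd⟩ := Prod.ext_iff.1 hcd_eq
  rwa [← hf hc, ← hf hd]

namespace Tog

variable {V W X : Type}

theorem relLe_of_mem_support {M : Tog V} {u v w : V} (p : M.G.Walk u v)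
    (hp : ∀ x ∈ p.support, M.le u x) (hw : w ∈ p.support) : M.relLe u w := by
  classical
  exact ⟨p.takeUntil w hw, fun x hx => hp x (p.support_takeUntil_subset_support hw hx)⟩

theorem relLe.induction {M : Tog V} {u : V} (P : V → Prop) (hu : P u)
    (step : ∀ x y, M.relLe u x → M.relLe u y → M.G.Adj x y → P x → P y)
    {v : V} (huv : M.relLe u v) : P v := by
  obtain ⟨p, hp⟩ := huv
  suffices ∀ x (q : M.G.Walk x v), (∀ w ∈ q.support, M.relLe u w) → P x → P v from
    this u p (fun w hw => relLe_of_mem_support p hp hw) hu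
  clear hp p
  intro x q
  induction q with
  | nil => exact fun _ hx => hx
  | cons hxy q ih =>
    intro hq hx
    have htail : ∀ w ∈ q.support, M.relLe u w := fun w hw => hq w (List.mem_cons_of_mem _ hw)
    exact ih htail (step _ _ (hq _ q.support.mem_cons_self) (htail _ q.start_mem_support) hxy hx)

theorem exists_le_mem_leaves [Finite V] (H : Tog V) (v : V) : ∃ m ∈ H.leaves, H.le v m := by
  let : PartialOrder V :=
    { le := H.le, le_refl := H.le_refl, le_trans := H.le_trans, le_antisymm := H.le_antisymm }
  obtain ⟨m, hvm, hmax⟩ := Finite.exists_le_maximal (p := fun _ => True) (a := v) trivial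
  exact ⟨m, fun w hmw => H.le_antisymm w m (hmax.2 trivial hmw) hmw, hvm⟩

theorem mem_pieceSet_of_le (H : Tog V) {S : Set V} {a b : V} (hab : H.le a b)
    (hb : b ∈ H.pieceSet S) : a ∈ H.pieceSet S :=
  let ⟨x, hx, hbx⟩ := hb
  ⟨x, hx, H.le_trans _ _ _ hab hbx⟩

namespace PieceDecomp

variable {H : Tog V} {A₁ A₂ : Set V}

theorem symm (h : H.PieceDecomp A₁ A₂) : H.PieceDecomp A₂ A₁ :=
  let ⟨S₁, S₂, h₁, h₂, hdisj, hunion, hA₁, hA₂⟩ := h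
  ⟨S₂, S₁, h₂, h₁, hdisj.symm, Set.union_comm S₁ S₂ ▸ hunion, hA₂, hA₁⟩

theorem mem_of_le (h : H.PieceDecomp A₁ A₂) {a b : V} (hab : H.le a b) (hb : b ∈ A₁) :
    a ∈ A₁ := by
  obtain ⟨S₁, -, -, -, -, -, rfl, -⟩ := h
  exact H.mem_pieceSet_of_le hab hb

theorem mem_or_mem [Finite V] (h : H.PieceDecomp A₁ A₂) (v : V) : v ∈ A₁ ∨ v ∈ A₂ := by
  obtain ⟨S₁, S₂, -, -, -, hunion, rfl, rfl⟩ := h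
  obtain ⟨m, hm, hvm⟩ := H.exists_le_mem_leaves v
  rw [← hunion] at hm
  exact hm.imp (fun hm₁ => ⟨m, hm₁, hvm⟩) (fun hm₂ => ⟨m, hm₂, hvm⟩)

theorem adj_mem [Finite V] (h : H.PieceDecomp A₁ A₂) {a b : V} (hab : H.G.Adj a b) :
    (a ∈ A₁ ∧ b ∈ A₁) ∨ (a ∈ A₂ ∧ b ∈ A₂) := by
  rcases H.guard a b hab with hle | hle
  · exact (h.mem_or_mem b).imp (fun hb => ⟨h.mem_of_le hle hb, hb⟩)
      (fun hb => ⟨h.symm.mem_of_le hle hb, hb⟩)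
  · exact (h.mem_or_mem a).imp (fun ha => ⟨ha, h.mem_of_le hle ha⟩)
      (fun ha => ⟨ha, h.symm.mem_of_le hle ha⟩)

end PieceDecomp

section Pullback

variable {H : Tog V} {D : Tog W} {G : Tog X} {A : Set V} {ξ : V → W} {ψ : W → X}

theorem le_of_le_of_adj (hψ : ∀ a b, D.le a b → G.le (ψ a) (ψ b))
    (hθ : H.IsEmbeddingOn G A (ψ ∘ ξ)) {u x y : V} (hu : u ∈ A) (hy : y ∈ A) (huy : H.le u y)
    (hxy : D.G.Adj (ξ x) (ξ y)) (hux : D.le (ξ u) (ξ x)) : D.le (ξ u) (ξ y) := by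
  rcases D.guard _ _ hxy with hxy | hyx
  · exact D.le_trans _ _ _ hux hxy
  rcases D.tree _ _ _ hux hyx with huy' | hyu
  · exact huy'
  have : u = y := hθ.1 hu hy (G.le_antisymm _ _ (hθ.2.2 u hu y hy huy) (hψ _ _ hyu))
  exact this ▸ D.le_refl _

theorem PieceDecomp.le_of_relLe [Finite V] {M : Tog V} {hM : M.IsLinear} {A₁ A₂ : Set V}
    (hdec : (M.relax hM).PieceDecomp A₁ A₂) (hψ : ∀ a b, D.le a b → G.le (ψ a) (ψ b))
    (hψadj : ∀ a b, G.G.Adj (ψ a) (ψ b) → D.G.Adj a b)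
    (hθ₁ : (M.relax hM).IsEmbeddingOn G A₁ (ψ ∘ ξ))
    (hθ₂ : (M.relax hM).IsEmbeddingOn G A₂ (ψ ∘ ξ)) {u v : V} (huv : M.relLe u v) :
    D.le (ξ u) (ξ v) := by
  refine relLe.induction (fun w => D.le (ξ u) (ξ w)) (D.le_refl _) ?_ huv
  intro x y _ huy hxy hux
  rcases hdec.adj_mem hxy with ⟨hx, hy⟩ | ⟨hx, hy⟩
  · exact le_of_le_of_adj hψ hθ₁ (hdec.mem_of_le huy hy) hy huy
      (hψadj _ _ (hθ₁.2.1 x hx y hy hxy)) hux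
  · exact le_of_le_of_adj hψ hθ₂ (hdec.symm.mem_of_le huy hy) hy huy
      (hψadj _ _ (hθ₂.2.1 x hx y hy hxy)) hux

theorem IsEmbeddingOn.of_comp (hθ : H.IsEmbeddingOn G A (ψ ∘ ξ))
    (hψadj : ∀ a b, G.G.Adj (ψ a) (ψ b) → D.G.Adj a b)
    (hle : ∀ u v, H.le u v → D.le (ξ u) (ξ v)) : H.IsEmbeddingOn D A ξ :=
  ⟨Set.InjOn.of_comp hθ.1, fun u hu v hv huv => hψadj _ _ (hθ.2.1 u hu v hv huv),
    fun u _ v _ huv => hle u v huv⟩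

end Pullback

end Tog

theorem pullback_relaxed_embedding_general {V : Type} [Fintype V]
    (HH : Tog V) (hEtog : HH.IsEtog)
    (A₁ A₂ : Set V) (hdec : HH.PieceDecomp A₁ A₂)
    (D : Tog V)
    (L : Tog V) (hlin : L.IsLinear) (hrel : L.relax hlin = D)
    (ψ : V → V) (hψ : D.IsEmbedding L ψ)
    (θ : V → V) (hθ1 : HH.IsEmbeddingOn L A₁ θ) (hθ2 : HH.IsEmbeddingOn L A₂ θ)
    (ξ : V → V) (hξ : ∀ v, ψ (ξ v) = θ v) :
    HH.IsEmbeddingOn D A₁ ξ ∧ HH.IsEmbeddingOn D A₂ ξ := by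
  obtain ⟨M, hM, rfl⟩ := hEtog
  subst hrel
  obtain rfl : θ = ψ ∘ ξ := funext fun v => (hξ v).symm
  have hψadj : ∀ a b, L.G.Adj (ψ a) (ψ b) → L.G.Adj a b :=
    fun a b => rel_of_rel_map_of_injective hψ.1 hψ.2.1
  have hle : ∀ u v, M.relLe u v → (L.relax hlin).le (ξ u) (ξ v) :=
    fun u v => hdec.le_of_relLe hψ.2.2 hψadj hθ1 hθ2
  exact ⟨hθ1.of_comp hψadj hle, hθ2.of_comp hψadj hle⟩

/-- Claim inside Lemma frankie-says-relax: pulling a relaxed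
embedding pair back along an embedding `ψ : 𝐃 ↪ 𝔻` fixing the stem yields a
relaxed embedding pair into `𝐃`. -/
theorem pullback_relaxed_embedding {V : Type} [Fintype V]
    (HH : Tog V) (hconn : HH.G.Connected) (hEtog : HH.IsEtog)
    (A₁ A₂ : Set V) (hdec : HH.PieceDecomp A₁ A₂)
    (D : Tog V) (hD : Tog.IsDefect HH A₁ A₂ HH.stem D)
    (L : Tog V) (hlin : L.IsLinear) (hrel : L.relax hlin = D)
    (ψ : V → V) (hψ : D.IsEmbedding L ψ) (hψfix : ∀ v ∈ HH.stem, ψ v = v)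
    (θ : V → V) (hθ1 : HH.IsEmbeddingOn L A₁ θ) (hθ2 : HH.IsEmbeddingOn L A₂ θ)
    (ξ : V → V) (hξ : ∀ v, ψ (ξ v) = θ v) :
    HH.IsEmbeddingOn D A₁ ξ ∧ HH.IsEmbeddingOn D A₂ ξ :=
  pullback_relaxed_embedding_general HH hEtog A₁ A₂ hdec D L hlin hrel ψ hψ θ hθ1 hθ2 ξ hξ
end
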